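/- There exists a numerical constant c > 0 with the following property. For any k ≥ 0, any B > 0 with B ≥ max_i α_i², and any β* ∈ S, if ‖β_ℓ‖_∞ ≤ B and γ_ℓ ≤ c/(L·B) for all ℓ ≤ k, and ‖β_{k+1}‖_∞ ≤ B and ‖β*‖_∞ ≤ B, then the Bregman divergences decrease: D_{h_{k+1}}(β*, β_{k+1}) ≤ D_{h_k}(β*, β_k) − γ_k L_{B_k}(β_k). -/

import Mathlib

open Finset Filter Real

noncomputable section

/-- Dot product on `Fin d → ℝ`. -/
def dotp {d : ℕ} (u v : Fin d → ℝ) : ℝ := ∑ j, u j * v j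

/-- Batch loss `L_B(β) = (1/(2|B|)) ∑_{i∈B} (⟨x_i,β⟩ − y_i)²`. -/
def batchLoss {d n : ℕ} (x : Fin n → Fin d → ℝ) (y : Fin n → ℝ)
    (B : Finset (Fin n)) (β : Fin d → ℝ) : ℝ :=
  (1 / (2 * (B.card : ℝ))) * ∑ i ∈ B, (dotp (x i) β - y i) ^ 2

/-- Gradient of the batch loss. -/
def gradBatch {d n : ℕ} (x : Fin n → Fin d → ℝ) (y : Fin n → ℝ)
    (B : Finset (Fin n)) (β : Fin d → ℝ) : Fin d → ℝ :=
  fun j => (1 / (B.card : ℝ)) * ∑ i ∈ B, (dotp (x i) β - y i) * x i j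

/-- SGD on the `(w₊, w₋)` parametrisation of the diagonal linear network. -/
def Witer {d n : ℕ} (x : Fin n → Fin d → ℝ) (y : Fin n → ℝ) (α : Fin d → ℝ)
    (γ : ℕ → ℝ) (Bk : ℕ → Finset (Fin n)) : ℕ → (Fin d → ℝ) × (Fin d → ℝ)
  | 0 => (α, α)
  | k + 1 =>
      let w := Witer x y α γ Bk k
      let β : Fin d → ℝ := fun j => ((w.1 j) ^ 2 - (w.2 j) ^ 2) / 2
      let g := gradBatch x y (Bk k) β
      (fun j => (1 - γ k * g j) * w.1 j, fun j => (1 + γ k * g j) * w.2 j)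

/-- The prediction iterates `β_k = ½(w_{+,k}² − w_{−,k}²)`. -/
def betaIter {d n : ℕ} (x : Fin n → Fin d → ℝ) (y : Fin n → ℝ) (α : Fin d → ℝ)
    (γ : ℕ → ℝ) (Bk : ℕ → Finset (Fin n)) (k : ℕ) : Fin d → ℝ :=
  fun j => ((Witer x y α γ Bk k).1 j ^ 2 - (Witer x y α γ Bk k).2 j ^ 2) / 2

/-- The stochastic gradient `∇L_{B_k}(β_k)` used at step `k`. -/
def gIter {d n : ℕ} (x : Fin n → Fin d → ℝ) (y : Fin n → ℝ) (α : Fin d → ℝ)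
    (γ : ℕ → ℝ) (Bk : ℕ → Finset (Fin n)) (k : ℕ) : Fin d → ℝ :=
  gradBatch x y (Bk k) (betaIter x y α γ Bk k)

def qplus (t : ℝ) : ℝ := -2 * t - Real.log ((1 - t) ^ 2)

def qminus (t : ℝ) : ℝ := 2 * t - Real.log ((1 + t) ^ 2)

def qfun (t : ℝ) : ℝ := -(1 / 2) * Real.log ((1 - t ^ 2) ^ 2)

/-- `α_{+,k}²` coordinatewise. -/
def alphaPlusSq {d n : ℕ} (x : Fin n → Fin d → ℝ) (y : Fin n → ℝ) (α : Fin d → ℝ)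
    (γ : ℕ → ℝ) (Bk : ℕ → Finset (Fin n)) (k : ℕ) : Fin d → ℝ :=
  fun j => (α j) ^ 2 * Real.exp (-(∑ ℓ ∈ Finset.range k, qplus (γ ℓ * gIter x y α γ Bk ℓ j)))

/-- `α_{−,k}²` coordinatewise. -/
def alphaMinusSq {d n : ℕ} (x : Fin n → Fin d → ℝ) (y : Fin n → ℝ) (α : Fin d → ℝ)
    (γ : ℕ → ℝ) (Bk : ℕ → Finset (Fin n)) (k : ℕ) : Fin d → ℝ :=
  fun j => (α j) ^ 2 * Real.exp (-(∑ ℓ ∈ Finset.range k, qminus (γ ℓ * gIter x y α γ Bk ℓ j)))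

/-- `α_k² = α_{+,k} ⊙ α_{−,k}` coordinatewise. -/
def alphaSq {d n : ℕ} (x : Fin n → Fin d → ℝ) (y : Fin n → ℝ) (α : Fin d → ℝ)
    (γ : ℕ → ℝ) (Bk : ℕ → Finset (Fin n)) (k : ℕ) : Fin d → ℝ :=
  fun j => Real.sqrt (alphaPlusSq x y α γ Bk k j * alphaMinusSq x y α γ Bk k j)

/-- `φ_k = ½ arcsinh((α_{+,k}² − α_{−,k}²)/(2α_k²))`. -/
def phiK {d n : ℕ} (x : Fin n → Fin d → ℝ) (y : Fin n → ℝ) (α : Fin d → ℝ)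
    (γ : ℕ → ℝ) (Bk : ℕ → Finset (Fin n)) (k : ℕ) : Fin d → ℝ :=
  fun j => (1 / 2) * Real.arsinh ((alphaPlusSq x y α γ Bk k j - alphaMinusSq x y α γ Bk k j) /
    (2 * alphaSq x y α γ Bk k j))

/-- Hyperbolic entropy `ψ_a`, expressed in terms of the squared scale `aSq = a²`. -/
def psiSq {d : ℕ} (aSq : Fin d → ℝ) (β : Fin d → ℝ) : ℝ :=
  (1 / 2) * ∑ j, (β j * Real.arsinh (β j / aSq j) - Real.sqrt ((β j) ^ 2 + (aSq j) ^ 2) + aSq j)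

/-- The time-varying potential `h_k(β) = ψ_{α_k}(β) − ⟨φ_k, β⟩`. -/
def hK {d n : ℕ} (x : Fin n → Fin d → ℝ) (y : Fin n → ℝ) (α : Fin d → ℝ)
    (γ : ℕ → ℝ) (Bk : ℕ → Finset (Fin n)) (k : ℕ) (β : Fin d → ℝ) : ℝ :=
  psiSq (alphaSq x y α γ Bk k) β - dotp (phiK x y α γ Bk k) β

/-- The gradient of `h_k`: `∇h_k(β) = ½ arcsinh(β/α_k²) − φ_k` coordinatewise. -/
def gradHK {d n : ℕ} (x : Fin n → Fin d → ℝ) (y : Fin n → ℝ) (α : Fin d → ℝ)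
    (γ : ℕ → ℝ) (Bk : ℕ → Finset (Fin n)) (k : ℕ) (β : Fin d → ℝ) : Fin d → ℝ :=
  fun j => (1 / 2) * Real.arsinh (β j / alphaSq x y α γ Bk k j) - phiK x y α γ Bk k j

/-- Bregman divergence of `h_k`. -/
def DhK {d n : ℕ} (x : Fin n → Fin d → ℝ) (y : Fin n → ℝ) (α : Fin d → ℝ)
    (γ : ℕ → ℝ) (Bk : ℕ → Finset (Fin n)) (k : ℕ) (β β' : Fin d → ℝ) : ℝ :=
  hK x y α γ Bk k β - hK x y α γ Bk k β' -
    dotp (gradHK x y α γ Bk k β') (fun j => β j - β' j)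

/-- Euclidean norm on `Fin d → ℝ`. -/
def norm2 {d : ℕ} (v : Fin d → ℝ) : ℝ := Real.sqrt (∑ j, v j ^ 2)

/-- ℓ¹ norm on `Fin d → ℝ`. -/
def l1norm {d : ℕ} (v : Fin d → ℝ) : ℝ := ∑ j, |v j|

/-- `H_B β = (1/|B|) ∑_{i∈B} ⟨x_i, β⟩ x_i`. -/
def HBop {d n : ℕ} (x : Fin n → Fin d → ℝ) (B : Finset (Fin n)) (β : Fin d → ℝ) : Fin d → ℝ :=
  fun j => (1 / (B.card : ℝ)) * ∑ i ∈ B, dotp (x i) β * x i j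



lemma sqrt_one_add_div_sq (b c : ℝ) (hc : 0 < c) :
    Real.sqrt (1 + (b/c)^2) = Real.sqrt (c^2 + b^2) / c := by
  have e : 1 + (b/c)^2 = (c^2+b^2)/c^2 := by field_simp
  rw [e, Real.sqrt_div (by positivity), Real.sqrt_sq hc.le]

lemma arsinh_formula (x : ℝ) : Real.arsinh x = Real.log (x + Real.sqrt (1 + x^2)) := by
  rw [Real.arsinh]

lemma arsinh_scale_nonneg (b c c' : ℝ) (hb : 0 ≤ b) (h' : 0 < c') (h : c' ≤ c) :
    arsinh (b/c') - arsinh (b/c) ≤ log (c/c') := by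
  have hc : 0 < c := lt_of_lt_of_le h' h
  rw [arsinh_formula, arsinh_formula, sqrt_one_add_div_sq _ _ h', sqrt_one_add_div_sq _ _ hc]
  have hSpos : (0:ℝ) < Real.sqrt (c^2+b^2) := Real.sqrt_pos.2 (by positivity)
  have hS'pos : (0:ℝ) < Real.sqrt (c'^2+b^2) := Real.sqrt_pos.2 (by positivity)
  have hN : (0:ℝ) < b/c + Real.sqrt (c^2+b^2)/c := by positivity
  have hN' : (0:ℝ) < b/c' + Real.sqrt (c'^2+b^2)/c' := by positivity
  rw [← Real.log_div (ne_of_gt hN') (ne_of_gt hN),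
    Real.log_le_log_iff (by positivity) (by positivity),
    div_le_div_iff₀ hN (by positivity)]
  have hs : Real.sqrt (c'^2+b^2) ≤ Real.sqrt (c^2+b^2) := by
    apply Real.sqrt_le_sqrt; nlinarith
  have hc' := h'.ne'
  have hcne := hc.ne'
  field_simp
  nlinarith


lemma arsinh_scale_abs (b c c' : ℝ) (h' : 0 < c') (h : c' ≤ c) :
    |arsinh (b/c') - arsinh (b/c)| ≤ log (c/c') := by
  have hc : 0 < c := lt_of_lt_of_le h' h
  rcases le_or_gt 0 b with hb | hb
  · rw [abs_of_nonneg]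
    · exact arsinh_scale_nonneg b c c' hb h' h
    · have : b/c ≤ b/c' := by apply div_le_div_of_nonneg_left hb h' h <;> positivity
      simpa using Real.arsinh_le_arsinh.2 this
  · have h1 := arsinh_scale_nonneg (-b) c c' (by linarith) h' h
    rw [neg_div, neg_div, Real.arsinh_neg, Real.arsinh_neg] at h1
    rw [abs_of_nonpos]
    · linarith
    · have : b/c' ≤ b/c := by
        rw [div_le_div_iff₀ h' hc]; nlinarith
      simpa using Real.arsinh_le_arsinh.2 this

lemma arsinh_w (p m : ℝ) (hp : 0 < p) (hm : 0 < m) :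
    arsinh (((p^2 - m^2)/2)/(p*m)) = log p - log m := by
  rw [arsinh_formula]
  have e : 1 + (((p^2 - m^2)/2)/(p*m))^2 = (((p^2+m^2)/2)/(p*m))^2 := by
    field_simp; ring
  rw [e, Real.sqrt_sq (by positivity)]
  have e2 : ((p^2 - m^2)/2)/(p*m) + ((p^2+m^2)/2)/(p*m) = p/m := by
    field_simp; ring
  rw [e2, Real.log_div hp.ne' hm.ne']

lemma sqrt_w (p m : ℝ) (hp : 0 ≤ p) (hm : 0 ≤ m) :
    Real.sqrt (((p^2 - m^2)/2)^2 + (p*m)^2) = (p^2+m^2)/2 := by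
  have e : ((p^2 - m^2)/2)^2 + (p*m)^2 = ((p^2+m^2)/2)^2 := by ring
  rw [e, Real.sqrt_sq (by positivity)]

lemma sqrt_diff_le (b a a' : ℝ) (h' : 0 < a') (h : a' ≤ a) :
    Real.sqrt (b^2 + a^2) - Real.sqrt (b^2 + a'^2) ≤ a - a' := by
  have hd : (0:ℝ) ≤ a - a' := by linarith
  have hs : a' ≤ Real.sqrt (b^2 + a'^2) := by
    have hs0 := Real.sqrt_le_sqrt (show a'^2 ≤ b^2+a'^2 by nlinarith)
    rwa [Real.sqrt_sq h'.le] at hs0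
  have h1 : Real.sqrt (b^2+a^2) ≤ Real.sqrt (b^2 + a'^2) + (a - a') := by
    rw [← Real.sqrt_sq (by positivity : (0:ℝ) ≤ Real.sqrt (b^2+a'^2) + (a-a'))]
    apply Real.sqrt_le_sqrt
    nlinarith [Real.sq_sqrt (by positivity : (0:ℝ) ≤ b^2 + a'^2)]
  linarith

lemma log_ineq1 (t : ℝ) (ht : |t| ≤ 1/4) : log (1+t) - log (1-t) - 2*t ≤ 2*t^2 := by
  have h1 : (0:ℝ) < 1 + t := by cases abs_le.1 ht; linarith
  have h2 : (0:ℝ) < 1 - t := by cases abs_le.1 ht; linarith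
  have hl1 : log (1+t) ≤ t := by
    have := Real.log_le_sub_one_of_pos h1; linarith
  have hl2 : -log (1-t) ≤ t/(1-t) := by
    have h3 : log (1-t)⁻¹ ≤ (1-t)⁻¹ - 1 := Real.log_le_sub_one_of_pos (by positivity)
    rw [Real.log_inv] at h3
    have : (1-t)⁻¹ - 1 = t/(1-t) := by field_simp; ring
    linarith [this ▸ h3]
  have key : t/(1-t) - t ≤ 2*t^2 := by
    rw [div_sub' (ne_of_gt h2)]
    rw [div_le_iff₀ h2]
    cases abs_le.1 ht with
    | intro hlo hhi => nlinarith
  linarith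

lemma log_ineq (t : ℝ) (ht : |t| ≤ 1/4) : |log (1+t) - log (1-t) - 2*t| ≤ 2*t^2 := by
  rw [abs_le]
  constructor
  · have := log_ineq1 (-t) (by rwa [abs_neg])
    have e : (1 + -t) = 1 - t := by ring
    have e2 : (1 - -t) = 1 + t := by ring
    rw [e, e2] at this
    nlinarith [this]
  · exact log_ineq1 t ht


lemma neg_log_le (x : ℝ) (h0 : 0 ≤ x) (h1 : x ≤ 1/2) : -log (1-x) ≤ 2*x := by
  have h2 : (0:ℝ) < 1 - x := by linarith
  have h3 : Real.exp (-(2*x)) ≤ 1 - x := by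
    have h4 : Real.exp (-(2*x)) ≤ 1/(1+2*x) := by
      rw [Real.exp_neg, ← one_div]
      apply one_div_le_one_div_of_le (by linarith)
      linarith [Real.add_one_le_exp (2*x)]
    have h5 : 1/(1+2*x) ≤ 1 - x := by
      rw [div_le_iff₀ (by linarith : (0:ℝ) < 1+2*x)]; nlinarith
    linarith
  calc -log (1-x) = log (1-x)⁻¹ := by rw [Real.log_inv]
    _ ≤ log (Real.exp (-(2*x)))⁻¹ := by
        apply Real.log_le_log (by positivity)
        exact inv_anti₀ (Real.exp_pos _) h3
    _ = 2*x := by rw [Real.log_inv, Real.log_exp]; ring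

set_option maxHeartbeats 1000000 in
lemma key_coord (wp wm t b B : ℝ) (hwp : 0 < wp) (hwm : 0 < wm) (ht : |t| ≤ 1/4)
    (hb : |b| ≤ B) (ha : wp*wm ≤ B) (hβ : |(wp^2 - wm^2)/2| ≤ B) :
    (1/2) * (b * (Real.arsinh (b / ((1-t)*wp * ((1+t)*wm))) - (Real.log ((1-t)*wp) - Real.log ((1+t)*wm)))
        - Real.sqrt (b^2 + ((1-t)*wp * ((1+t)*wm))^2) + (((1-t)*wp)^2 + ((1+t)*wm)^2)/2)
    ≤ (1/2) * (b * (Real.arsinh (b / (wp*wm)) - (Real.log wp - Real.log wm))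
        - Real.sqrt (b^2 + (wp*wm)^2) + (wp^2+wm^2)/2)
      - t * ((wp^2-wm^2)/2 - b) + (7/2)*B*t^2 := by
  obtain ⟨htl, htr⟩ := abs_le.1 ht
  have h1t : (0:ℝ) < 1 - t := by linarith
  have h2t : (0:ℝ) < 1 + t := by linarith
  have hBpos : (0:ℝ) < B := lt_of_lt_of_le (mul_pos hwp hwm) ha
  have ht2 : t^2 ≤ 1/2 := by nlinarith
  have hlp : Real.log ((1-t)*wp) = Real.log (1-t) + Real.log wp :=
    Real.log_mul h1t.ne' hwp.ne'
  have hlm : Real.log ((1+t)*wm) = Real.log (1+t) + Real.log wm :=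
    Real.log_mul h2t.ne' hwm.ne'
  have harg : (1-t)*wp * ((1+t)*wm) = (wp*wm)*(1-t^2) := by ring
  rw [hlp, hlm, harg]
  have ha2pos : (0:ℝ) < wp*wm := mul_pos hwp hwm
  have ha2'pos : (0:ℝ) < (wp*wm)*(1-t^2) := by nlinarith
  have ha2'le : (wp*wm)*(1-t^2) ≤ wp*wm := by nlinarith
  -- bound 1 : arsinh scaling
  have h1 : |Real.arsinh (b/((wp*wm)*(1-t^2))) - Real.arsinh (b/(wp*wm))| ≤ 2*t^2 := by
    have hA := arsinh_scale_abs b (wp*wm) ((wp*wm)*(1-t^2)) ha2'pos ha2'le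
    have e : (wp*wm)/((wp*wm)*(1-t^2)) = (1-t^2)⁻¹ := by
      rw [div_mul_eq_div_div, div_self ha2pos.ne', one_div]
    rw [e, Real.log_inv] at hA
    have := neg_log_le (t^2) (sq_nonneg t) ht2
    linarith [hA, this]
  have hb1 : b * (Real.arsinh (b/((wp*wm)*(1-t^2))) - Real.arsinh (b/(wp*wm))) ≤ 2*B*t^2 := by
    calc b * _ ≤ |b * (Real.arsinh (b/((wp*wm)*(1-t^2))) - Real.arsinh (b/(wp*wm)))| := le_abs_self _
    _ = |b| * |Real.arsinh (b/((wp*wm)*(1-t^2))) - Real.arsinh (b/(wp*wm))| := abs_mul _ _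
    _ ≤ B * (2*t^2) := by
        apply mul_le_mul hb h1 (abs_nonneg _) hBpos.le
    _ = 2*B*t^2 := by ring
  -- bound 2 : log remainder
  have hb2 : b * (Real.log (1+t) - Real.log (1-t) - 2*t) ≤ 2*B*t^2 := by
    calc b * _ ≤ |b * (Real.log (1+t) - Real.log (1-t) - 2*t)| := le_abs_self _
    _ = |b| * |Real.log (1+t) - Real.log (1-t) - 2*t| := abs_mul _ _
    _ ≤ B * (2*t^2) := mul_le_mul hb (log_ineq t ht) (abs_nonneg _) hBpos.le
    _ = 2*B*t^2 := by ring
  -- bound 3 : sqrt difference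
  have h3 : Real.sqrt (b^2 + (wp*wm)^2) - Real.sqrt (b^2 + ((wp*wm)*(1-t^2))^2) ≤ B*t^2 := by
    have := sqrt_diff_le b (wp*wm) ((wp*wm)*(1-t^2)) ha2'pos ha2'le
    nlinarith [sq_nonneg t]
  -- bound 4 : quadratic term
  have hquad : t^2*(wp^2+wm^2) ≤ 4*B*t^2 := by
    have hq : wp^2 + wm^2 ≤ 4*B := by
      obtain ⟨h1', h2'⟩ := abs_le.1 hβ
      have key : (wp^2+wm^2)^2 ≤ 16*B^2 := by nlinarith [mul_pos hwp hwm]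
      nlinarith [key, sq_nonneg (wp^2+wm^2)]
    have := mul_le_mul_of_nonneg_left hq (sq_nonneg t)
    linarith
  linarith [hb1, hb2, h3, hquad]

section Helpers

open Real

variable {d n : ℕ} (x : Fin n → Fin d → ℝ) (y : Fin n → ℝ) (α : Fin d → ℝ)
    (γ : ℕ → ℝ) (Bk : ℕ → Finset (Fin n))

lemma Witer_fst (m : ℕ) (j : Fin d) :
    (Witer x y α γ Bk m).1 j = α j * ∏ ℓ ∈ Finset.range m, (1 - γ ℓ * gIter x y α γ Bk ℓ j) := by
  induction m with
  | zero => simp [Witer]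
  | succ m ih =>
      rw [Finset.prod_range_succ]
      show (1 - γ m * gradBatch x y (Bk m) _ j) * (Witer x y α γ Bk m).1 j = _
      rw [ih]
      rw [show gradBatch x y (Bk m) (fun j => ((Witer x y α γ Bk m).1 j ^ 2 - (Witer x y α γ Bk m).2 j ^ 2) / 2) j = gIter x y α γ Bk m j from rfl]
      ring

lemma Witer_snd (m : ℕ) (j : Fin d) :
    (Witer x y α γ Bk m).2 j = α j * ∏ ℓ ∈ Finset.range m, (1 + γ ℓ * gIter x y α γ Bk ℓ j) := by
  induction m with
  | zero => simp [Witer]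
  | succ m ih =>
      rw [Finset.prod_range_succ]
      show (1 + γ m * gradBatch x y (Bk m) _ j) * (Witer x y α γ Bk m).2 j = _
      rw [ih]
      rw [show gradBatch x y (Bk m) (fun j => ((Witer x y α γ Bk m).1 j ^ 2 - (Witer x y α γ Bk m).2 j ^ 2) / 2) j = gIter x y α γ Bk m j from rfl]
      ring

lemma Witer_fst_pos (m : ℕ) (j : Fin d) (hα : 0 < α j)
    (h : ∀ ℓ, ℓ < m → |γ ℓ * gIter x y α γ Bk ℓ j| < 1) :
    0 < (Witer x y α γ Bk m).1 j := by
  rw [Witer_fst]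
  apply mul_pos hα
  apply Finset.prod_pos
  intro ℓ hℓ
  have := (abs_lt.1 (h ℓ (Finset.mem_range.1 hℓ))).2
  linarith

lemma Witer_snd_pos (m : ℕ) (j : Fin d) (hα : 0 < α j)
    (h : ∀ ℓ, ℓ < m → |γ ℓ * gIter x y α γ Bk ℓ j| < 1) :
    0 < (Witer x y α γ Bk m).2 j := by
  rw [Witer_snd]
  apply mul_pos hα
  apply Finset.prod_pos
  intro ℓ hℓ
  have := (abs_lt.1 (h ℓ (Finset.mem_range.1 hℓ))).1
  linarith

lemma alphaSq_eq (m : ℕ) (j : Fin d) (hα : 0 < α j)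
    (h : ∀ ℓ, ℓ < m → |γ ℓ * gIter x y α γ Bk ℓ j| < 1) :
    alphaSq x y α γ Bk m j = (Witer x y α γ Bk m).1 j * (Witer x y α γ Bk m).2 j := by
  have hfac : ∀ ℓ ∈ Finset.range m,
      Real.exp (-(qplus (γ ℓ * gIter x y α γ Bk ℓ j))) *
      Real.exp (-(qminus (γ ℓ * gIter x y α γ Bk ℓ j))) =
      ((1 - γ ℓ * gIter x y α γ Bk ℓ j) * (1 + γ ℓ * gIter x y α γ Bk ℓ j))^2 := by
    intro ℓ hℓ
    obtain ⟨h1, h2⟩ := abs_lt.1 (h ℓ (Finset.mem_range.1 hℓ))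
    set t := γ ℓ * gIter x y α γ Bk ℓ j
    rw [qplus, qminus]
    rw [show -(-2*t - Real.log ((1-t)^2)) = 2*t + Real.log ((1-t)^2) by ring,
        show -(2*t - Real.log ((1+t)^2)) = -(2*t) + Real.log ((1+t)^2) by ring,
        Real.exp_add, Real.exp_add, Real.exp_log (by nlinarith : (0:ℝ) < (1-t)^2), Real.exp_log (by nlinarith : (0:ℝ) < (1+t)^2)]
    rw [show Real.exp (2*t) * (1-t)^2 * (Real.exp (-(2*t)) * (1+t)^2)
        = (Real.exp (2*t) * Real.exp (-(2*t))) * ((1-t)^2 * (1+t)^2) by ring,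
      ← Real.exp_add]
    simp only [add_neg_cancel, Real.exp_zero, one_mul]
    ring
  have e1 : Real.exp (-(∑ ℓ ∈ Finset.range m, qplus (γ ℓ * gIter x y α γ Bk ℓ j))) =
      ∏ ℓ ∈ Finset.range m, Real.exp (-(qplus (γ ℓ * gIter x y α γ Bk ℓ j))) := by
    rw [← Real.exp_sum]; congr 1; rw [Finset.sum_neg_distrib]
  have e2 : Real.exp (-(∑ ℓ ∈ Finset.range m, qminus (γ ℓ * gIter x y α γ Bk ℓ j))) =
      ∏ ℓ ∈ Finset.range m, Real.exp (-(qminus (γ ℓ * gIter x y α γ Bk ℓ j))) := by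
    rw [← Real.exp_sum]; congr 1; rw [Finset.sum_neg_distrib]
  have hprod : alphaPlusSq x y α γ Bk m j * alphaMinusSq x y α γ Bk m j =
      ((Witer x y α γ Bk m).1 j * (Witer x y α γ Bk m).2 j)^2 := by
    rw [alphaPlusSq, alphaMinusSq, e1, e2, Witer_fst, Witer_snd]
    have lhs : α j ^ 2 * (∏ ℓ ∈ Finset.range m, Real.exp (-(qplus (γ ℓ * gIter x y α γ Bk ℓ j)))) *
        (α j ^ 2 * ∏ ℓ ∈ Finset.range m, Real.exp (-(qminus (γ ℓ * gIter x y α γ Bk ℓ j)))) =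
        α j ^ 4 * ∏ ℓ ∈ Finset.range m,
          (Real.exp (-(qplus (γ ℓ * gIter x y α γ Bk ℓ j))) *
           Real.exp (-(qminus (γ ℓ * gIter x y α γ Bk ℓ j)))) := by
      rw [Finset.prod_mul_distrib]; ring
    rw [lhs, Finset.prod_congr rfl hfac]
    have rhs : (α j * ∏ ℓ ∈ Finset.range m, (1 - γ ℓ * gIter x y α γ Bk ℓ j)) *
        (α j * ∏ ℓ ∈ Finset.range m, (1 + γ ℓ * gIter x y α γ Bk ℓ j)) =
        α j ^ 2 * ∏ ℓ ∈ Finset.range m,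
          ((1 - γ ℓ * gIter x y α γ Bk ℓ j) * (1 + γ ℓ * gIter x y α γ Bk ℓ j)) := by
      rw [Finset.prod_mul_distrib]; ring
    rw [rhs, mul_pow, ← Finset.prod_pow]
    ring
  rw [alphaSq, hprod, Real.sqrt_sq]
  exact (mul_pos (Witer_fst_pos x y α γ Bk m j hα h) (Witer_snd_pos x y α γ Bk m j hα h)).le

lemma DhK_expand (m : ℕ) (β β' : Fin d → ℝ) :
    DhK x y α γ Bk m β β' = ∑ j, (1/2) * (β j *
        (Real.arsinh (β j / alphaSq x y α γ Bk m j) - Real.arsinh (β' j / alphaSq x y α γ Bk m j))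
      - Real.sqrt ((β j)^2 + (alphaSq x y α γ Bk m j)^2)
      + Real.sqrt ((β' j)^2 + (alphaSq x y α γ Bk m j)^2)) := by
  simp only [DhK, hK, psiSq, dotp, gradHK, Finset.mul_sum]
  rw [← Finset.sum_sub_distrib, ← Finset.sum_sub_distrib, ← Finset.sum_sub_distrib,
    ← Finset.sum_sub_distrib]
  apply Finset.sum_congr rfl
  intro j _
  ring

lemma dotp_le_norm2 (u v : Fin d → ℝ) : dotp u v ≤ norm2 u * norm2 v := by
  calc dotp u v ≤ |∑ j, u j * v j| := le_abs_self _
    _ = Real.sqrt ((∑ j, u j * v j)^2) := (Real.sqrt_sq_eq_abs _).symm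
    _ ≤ Real.sqrt ((∑ j, u j ^2) * ∑ j, v j^2) :=
        Real.sqrt_le_sqrt (Finset.sum_mul_sq_le_sq_mul_sq Finset.univ u v)
    _ = norm2 u * norm2 v := by
        rw [norm2, norm2, ← Real.sqrt_mul (by positivity)]

lemma gradBatch_eq (B : Finset (Fin n)) (β βstar : Fin d → ℝ)
    (hy : ∀ i, dotp (x i) βstar = y i) :
    gradBatch x y B β = HBop x B (fun j => β j - βstar j) := by
  funext j
  simp only [gradBatch, HBop]
  congr 1
  apply Finset.sum_congr rfl
  intro i _
  congr 1
  rw [← hy i]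
  simp only [dotp, ← Finset.sum_sub_distrib]
  apply Finset.sum_congr rfl
  intro j' _
  ring

lemma batchLoss_nonneg (B : Finset (Fin n)) (β : Fin d → ℝ) :
    0 ≤ batchLoss x y B β := by
  apply mul_nonneg (by positivity)
  exact Finset.sum_nonneg fun i _ => sq_nonneg _

lemma grad_dot_eq (B : Finset (Fin n)) (hB : B.Nonempty) (β βstar : Fin d → ℝ)
    (hy : ∀ i, dotp (x i) βstar = y i) :
    ∑ j, gradBatch x y B β j * (β j - βstar j) = 2 * batchLoss x y B β := by
  have hm : (0:ℝ) < (B.card : ℝ) := by exact_mod_cast Finset.card_pos.2 hB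
  simp only [gradBatch, batchLoss]
  rw [Finset.sum_congr rfl (fun j _ => by
    rw [mul_assoc, Finset.sum_mul] :
    ∀ j ∈ Finset.univ, (1 / (B.card : ℝ) * ∑ i ∈ B, (dotp (x i) β - y i) * x i j) * (β j - βstar j)
      = 1 / (B.card : ℝ) * ∑ i ∈ B, ((dotp (x i) β - y i) * x i j * (β j - βstar j)))]
  rw [← Finset.mul_sum, Finset.sum_comm]
  have : ∀ i ∈ B, ∑ j, (dotp (x i) β - y i) * x i j * (β j - βstar j)
      = (dotp (x i) β - y i)^2 := by
    intro i _
    have : ∑ j, (dotp (x i) β - y i) * x i j * (β j - βstar j)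
        = (dotp (x i) β - y i) * (dotp (x i) β - dotp (x i) βstar) := by
      rw [dotp, dotp, ← Finset.sum_sub_distrib, Finset.mul_sum]
      apply Finset.sum_congr rfl
      intro j _; ring
    rw [this, hy i]; ring
  rw [Finset.sum_congr rfl this]
  ring

lemma grad_sq_le (B : Finset (Fin n)) (hB : B.Nonempty) (β : Fin d → ℝ) (Lc : ℝ) (hLc : 0 < Lc)
    (hop : ∀ v : Fin d → ℝ, norm2 (HBop x B v) ≤ Lc * norm2 v) :
    ∑ j, (gradBatch x y B β j)^2 ≤ 2 * Lc * batchLoss x y B β := by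
  have hm : (0:ℝ) < (B.card : ℝ) := by exact_mod_cast Finset.card_pos.2 hB
  set g := gradBatch x y B β with hg
  set G2 := ∑ j, (g j)^2 with hG2
  set r : Fin n → ℝ := fun i => dotp (x i) β - y i with hr
  -- identity A : G2 = (1/m) ∑_i r i * dotp (x i) g
  have idA : G2 = (1/(B.card:ℝ)) * ∑ i ∈ B, r i * dotp (x i) g := by
    rw [hG2]
    have : ∀ j ∈ Finset.univ, (g j)^2 = (1/(B.card:ℝ)) * ∑ i ∈ B, (r i * x i j * g j) := by
      intro j _
      rw [show (g j)^2 = g j * g j from sq (g j) ▸ rfl]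
      nth_rewrite 1 [hg]
      show ((1/(B.card:ℝ)) * ∑ i ∈ B, (dotp (x i) β - y i) * x i j) * g j = _
      rw [mul_assoc, Finset.sum_mul]
    rw [Finset.sum_congr rfl this, ← Finset.mul_sum, Finset.sum_comm]
    congr 1
    apply Finset.sum_congr rfl
    intro i _
    rw [dotp, Finset.mul_sum]
    apply Finset.sum_congr rfl
    intro j _; ring
  -- identity B : ∑_i (dotp (x i) g)^2 = m * dotp g (HBop x B g)
  have idB : ∑ i ∈ B, (dotp (x i) g)^2 = (B.card:ℝ) * dotp g (HBop x B g) := by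
    rw [dotp]
    have : ∀ j ∈ Finset.univ, g j * HBop x B g j
        = (1/(B.card:ℝ)) * ∑ i ∈ B, (dotp (x i) g * x i j * g j) := by
      intro j _
      rw [HBop, mul_comm (g j), mul_assoc, Finset.sum_mul]
    rw [Finset.sum_congr rfl this, ← Finset.mul_sum, Finset.sum_comm]
    rw [← mul_assoc, mul_one_div, div_self hm.ne', one_mul]
    apply Finset.sum_congr rfl
    intro i _
    rw [sq, dotp, Finset.sum_mul]
    apply Finset.sum_congr rfl
    intro j _; ring
  -- Cauchy-Schwarz
  have hCS := Finset.sum_mul_sq_le_sq_mul_sq B r (fun i => dotp (x i) g)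
  -- dotp g (HBop g) ≤ Lc * G2
  have hdot : dotp g (HBop x B g) ≤ Lc * G2 := by
    calc dotp g (HBop x B g) ≤ norm2 g * norm2 (HBop x B g) := dotp_le_norm2 _ _
      _ ≤ norm2 g * (Lc * norm2 g) := by
          apply mul_le_mul_of_nonneg_left (hop g)
          exact Real.sqrt_nonneg _
      _ = Lc * (norm2 g)^2 := by ring
      _ = Lc * G2 := by rw [norm2, Real.sq_sqrt (by positivity)]
  -- ∑ r² = 2 m batchLoss
  have hrL : ∑ i ∈ B, (r i)^2 = 2 * (B.card:ℝ) * batchLoss x y B β := by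
    rw [batchLoss]
    field_simp
    rfl
  have hL0 : 0 ≤ batchLoss x y B β := batchLoss_nonneg x y B β
  have hG2nn : 0 ≤ G2 := Finset.sum_nonneg fun j _ => sq_nonneg _
  -- combine : G2^2 ≤ 2 Lc L * G2
  have hmain : G2^2 ≤ (2 * Lc * batchLoss x y B β) * G2 := by
    have h1 : G2^2 = (1/(B.card:ℝ))^2 * (∑ i ∈ B, r i * dotp (x i) g)^2 := by
      rw [idA]; ring
    have h2 : (1/(B.card:ℝ))^2 * (∑ i ∈ B, r i * dotp (x i) g)^2
        ≤ (1/(B.card:ℝ))^2 * ((∑ i ∈ B, (r i)^2) * ∑ i ∈ B, (dotp (x i) g)^2) := by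
      apply mul_le_mul_of_nonneg_left hCS (by positivity)
    have h3 : (1/(B.card:ℝ))^2 * ((∑ i ∈ B, (r i)^2) * ∑ i ∈ B, (dotp (x i) g)^2)
        = (2 * batchLoss x y B β) * ((1/(B.card:ℝ)) * ((B.card:ℝ) * dotp g (HBop x B g))) := by
      rw [hrL, ← idB]; field_simp
    have h4 : (1/(B.card:ℝ)) * ((B.card:ℝ) * dotp g (HBop x B g)) = dotp g (HBop x B g) := by
      field_simp
    have h5 : (2 * batchLoss x y B β) * dotp g (HBop x B g)
        ≤ (2 * batchLoss x y B β) * (Lc * G2) := by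
      apply mul_le_mul_of_nonneg_left hdot (by linarith)
    calc G2^2 = (1/(B.card:ℝ))^2 * (∑ i ∈ B, r i * dotp (x i) g)^2 := h1
      _ ≤ _ := h2
      _ = (2 * batchLoss x y B β) * ((1/(B.card:ℝ)) * ((B.card:ℝ) * dotp g (HBop x B g))) := h3
      _ = (2 * batchLoss x y B β) * dotp g (HBop x B g) := by rw [h4]
      _ ≤ (2 * batchLoss x y B β) * (Lc * G2) := h5
      _ = (2 * Lc * batchLoss x y B β) * G2 := by ring
  rcases eq_or_lt_of_le hG2nn with hG0 | hGpos
  · rw [← hG0]; positivity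
  · have := le_of_mul_le_mul_right (by nlinarith [hmain] : G2 * G2 ≤ (2 * Lc * batchLoss x y B β) * G2) hGpos
    exact this

end Helpers

set_option maxHeartbeats 1600000 in
theorem stmt3 : ∃ c : ℝ, 0 < c ∧
    ∀ (d n : ℕ) (x : Fin n → Fin d → ℝ) (y : Fin n → ℝ)
      (α : Fin d → ℝ), (∀ j, 0 < α j) →
    ∀ (γ : ℕ → ℝ), (∀ k, 0 ≤ γ k) →
    ∀ (Bk : ℕ → Finset (Fin n)), (∀ k, (Bk k).Nonempty) →
    ∀ (Lc : ℝ), 0 < Lc →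
    (∀ (k : ℕ) (β : Fin d → ℝ), norm2 (HBop x (Bk k) β) ≤ Lc * norm2 β ∧
      ‖HBop x (Bk k) β‖ ≤ Lc * ‖β‖) →
    ∀ (k : ℕ) (B : ℝ), 0 < B → (∀ j, (α j) ^ 2 ≤ B) →
    ∀ βstar : Fin d → ℝ, (∀ i, dotp (x i) βstar = y i) → ‖βstar‖ ≤ B →
    (∀ ℓ, ℓ ≤ k → ‖betaIter x y α γ Bk ℓ‖ ≤ B ∧ γ ℓ ≤ c / (Lc * B)) →
    ‖betaIter x y α γ Bk (k + 1)‖ ≤ B →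
    DhK x y α γ Bk (k + 1) βstar (betaIter x y α γ Bk (k + 1)) ≤
      DhK x y α γ Bk k βstar (betaIter x y α γ Bk k)
        - γ k * batchLoss x y (Bk k) (betaIter x y α γ Bk k) := by
  refine ⟨1/8, by norm_num, ?_⟩
  intro d n x y α hα γ hγ Bk hBk Lc hLc hop k B hB hαB βstar hy hβstar hsteps hβk1
  have hLB : (0:ℝ) < Lc * B := mul_pos hLc hB
  -- step-size bound along the trajectory
  have ht : ∀ ℓ, ℓ ≤ k → ∀ j, |γ ℓ * gIter x y α γ Bk ℓ j| ≤ 1/4 := by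
    intro ℓ hℓ j
    have hgeq : gIter x y α γ Bk ℓ
        = HBop x (Bk ℓ) (fun j => betaIter x y α γ Bk ℓ j - βstar j) :=
      gradBatch_eq x y (Bk ℓ) _ βstar hy
    have h1 : |gIter x y α γ Bk ℓ j| ≤ Lc * (2*B) := by
      calc |gIter x y α γ Bk ℓ j| = ‖gIter x y α γ Bk ℓ j‖ := (Real.norm_eq_abs _).symm
        _ ≤ ‖gIter x y α γ Bk ℓ‖ := norm_le_pi_norm _ j
        _ = ‖HBop x (Bk ℓ) (fun j => betaIter x y α γ Bk ℓ j - βstar j)‖ := by rw [hgeq]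
        _ ≤ Lc * ‖(fun j => betaIter x y α γ Bk ℓ j - βstar j : Fin d → ℝ)‖ := (hop ℓ _).2
        _ ≤ Lc * (2*B) := by
            apply mul_le_mul_of_nonneg_left _ hLc.le
            have e : (fun j => betaIter x y α γ Bk ℓ j - βstar j : Fin d → ℝ)
                = betaIter x y α γ Bk ℓ - βstar := rfl
            rw [e]
            calc ‖betaIter x y α γ Bk ℓ - βstar‖
                ≤ ‖betaIter x y α γ Bk ℓ‖ + ‖βstar‖ := norm_sub_le _ _
              _ ≤ 2*B := by linarith [(hsteps ℓ hℓ).1]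
    rw [abs_mul, abs_of_nonneg (hγ ℓ)]
    calc γ ℓ * |gIter x y α γ Bk ℓ j| ≤ (1/8/(Lc*B)) * (Lc*(2*B)) := by
          apply mul_le_mul (hsteps ℓ hℓ).2 h1 (abs_nonneg _) (by positivity)
      _ = 1/4 := by field_simp; ring
  have htlt : ∀ m, m ≤ k + 1 → ∀ ℓ, ℓ < m → ∀ j, |γ ℓ * gIter x y α γ Bk ℓ j| < 1 := by
    intro m hm ℓ hℓ j
    exact lt_of_le_of_lt (ht ℓ (by omega) j) (by norm_num)
  -- per-coordinate inequality
  have hcoord : ∀ j ∈ Finset.univ, (1/2 : ℝ) * (βstar j *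
        (Real.arsinh (βstar j / alphaSq x y α γ Bk (k+1) j)
          - Real.arsinh (betaIter x y α γ Bk (k+1) j / alphaSq x y α γ Bk (k+1) j))
      - Real.sqrt ((βstar j)^2 + (alphaSq x y α γ Bk (k+1) j)^2)
      + Real.sqrt ((betaIter x y α γ Bk (k+1) j)^2 + (alphaSq x y α γ Bk (k+1) j)^2))
      ≤ (1/2 : ℝ) * (βstar j *
        (Real.arsinh (βstar j / alphaSq x y α γ Bk k j)
          - Real.arsinh (betaIter x y α γ Bk k j / alphaSq x y α γ Bk k j))
      - Real.sqrt ((βstar j)^2 + (alphaSq x y α γ Bk k j)^2)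
      + Real.sqrt ((betaIter x y α γ Bk k j)^2 + (alphaSq x y α γ Bk k j)^2))
      - (γ k * gIter x y α γ Bk k j) * (betaIter x y α γ Bk k j - βstar j)
      + (7/2)*B*(γ k * gIter x y α γ Bk k j)^2 := by
    intro j _
    set t := γ k * gIter x y α γ Bk k j with htdef
    set wp := (Witer x y α γ Bk k).1 j with hwpdef
    set wm := (Witer x y α γ Bk k).2 j with hwmdef
    have hwp : 0 < wp := Witer_fst_pos x y α γ Bk k j (hα j) (fun ℓ hℓ => htlt k (by omega) ℓ hℓ j)
    have hwm : 0 < wm := Witer_snd_pos x y α γ Bk k j (hα j) (fun ℓ hℓ => htlt k (by omega) ℓ hℓ j)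
    have habs : |t| ≤ 1/4 := ht k le_rfl j
    obtain ⟨htl, htr⟩ := abs_le.1 habs
    have hwp1 : (Witer x y α γ Bk (k+1)).1 j = (1 - t) * wp := by
      rw [hwpdef, Witer_fst, Witer_fst, Finset.prod_range_succ, htdef]; ring
    have hwm1 : (Witer x y α γ Bk (k+1)).2 j = (1 + t) * wm := by
      rw [hwmdef, Witer_snd, Witer_snd, Finset.prod_range_succ, htdef]; ring
    have halk : alphaSq x y α γ Bk k j = wp * wm :=
      alphaSq_eq x y α γ Bk k j (hα j) (fun ℓ hℓ => htlt k (by omega) ℓ hℓ j)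
    have halk1 : alphaSq x y α γ Bk (k+1) j = (1 - t) * wp * ((1 + t) * wm) := by
      rw [alphaSq_eq x y α γ Bk (k+1) j (hα j) (fun ℓ hℓ => htlt (k+1) le_rfl ℓ hℓ j), hwp1, hwm1]
    have hβk : betaIter x y α γ Bk k j = (wp^2 - wm^2)/2 := rfl
    have hβk1e : betaIter x y α γ Bk (k+1) j = (((1-t)*wp)^2 - ((1+t)*wm)^2)/2 := by
      show ((Witer x y α γ Bk (k+1)).1 j ^ 2 - (Witer x y α γ Bk (k+1)).2 j ^ 2)/2 = _
      rw [hwp1, hwm1]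
    have h1t : (0:ℝ) < 1 - t := by linarith
    have h2t : (0:ℝ) < 1 + t := by linarith
    rw [halk, halk1, hβk, hβk1e]
    rw [arsinh_w wp wm hwp hwm, sqrt_w wp wm hwp.le hwm.le,
        arsinh_w ((1-t)*wp) ((1+t)*wm) (by positivity) (by positivity),
        sqrt_w ((1-t)*wp) ((1+t)*wm) (by positivity) (by positivity)]
    -- side bounds for key_coord
    have hbj : |βstar j| ≤ B := by
      calc |βstar j| = ‖βstar j‖ := (Real.norm_eq_abs _).symm
        _ ≤ ‖βstar‖ := norm_le_pi_norm _ j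
        _ ≤ B := hβstar
    have haj : wp * wm ≤ B := by
      rw [hwpdef, hwmdef, Witer_fst, Witer_snd]
      have e : (α j * ∏ ℓ ∈ Finset.range k, (1 - γ ℓ * gIter x y α γ Bk ℓ j)) *
          (α j * ∏ ℓ ∈ Finset.range k, (1 + γ ℓ * gIter x y α γ Bk ℓ j)) =
          α j ^ 2 * ∏ ℓ ∈ Finset.range k,
            ((1 - γ ℓ * gIter x y α γ Bk ℓ j) * (1 + γ ℓ * gIter x y α γ Bk ℓ j)) := by
        rw [Finset.prod_mul_distrib]; ring
      rw [e]
      have hp1 : ∏ ℓ ∈ Finset.range k,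
          ((1 - γ ℓ * gIter x y α γ Bk ℓ j) * (1 + γ ℓ * gIter x y α γ Bk ℓ j)) ≤ 1 := by
        apply Finset.prod_le_one
        · intro ℓ hℓ
          obtain ⟨a1, a2⟩ := abs_lt.1 (htlt k (by omega) ℓ (Finset.mem_range.1 hℓ) j)
          exact mul_nonneg (by linarith) (by linarith)
        · intro ℓ hℓ
          obtain ⟨a1, a2⟩ := abs_lt.1 (htlt k (by omega) ℓ (Finset.mem_range.1 hℓ) j)
          nlinarith [sq_nonneg (γ ℓ * gIter x y α γ Bk ℓ j)]
      calc α j ^ 2 * ∏ ℓ ∈ Finset.range k,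
            ((1 - γ ℓ * gIter x y α γ Bk ℓ j) * (1 + γ ℓ * gIter x y α γ Bk ℓ j))
          ≤ α j ^ 2 * 1 := by
            apply mul_le_mul_of_nonneg_left hp1 (sq_nonneg _)
        _ ≤ B := by rw [mul_one]; exact hαB j
    have hβj : |(wp^2 - wm^2)/2| ≤ B := by
      rw [← hβk]
      calc |betaIter x y α γ Bk k j| = ‖betaIter x y α γ Bk k j‖ := (Real.norm_eq_abs _).symm
        _ ≤ ‖betaIter x y α γ Bk k‖ := norm_le_pi_norm _ j
        _ ≤ B := (hsteps k le_rfl).1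
    exact key_coord wp wm t (βstar j) B hwp hwm habs hbj haj hβj
  -- sum up
  rw [DhK_expand, DhK_expand]
  refine le_trans (Finset.sum_le_sum hcoord) ?_
  rw [Finset.sum_add_distrib, Finset.sum_sub_distrib]
  have hgr : gIter x y α γ Bk k = gradBatch x y (Bk k) (betaIter x y α γ Bk k) := rfl
  have hT : ∑ j, (γ k * gIter x y α γ Bk k j) * (betaIter x y α γ Bk k j - βstar j)
      = γ k * (2 * batchLoss x y (Bk k) (betaIter x y α γ Bk k)) := by
    rw [← grad_dot_eq x y (Bk k) (hBk k) (betaIter x y α γ Bk k) βstar hy, Finset.mul_sum]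
    apply Finset.sum_congr rfl
    intro j _
    rw [hgr]; ring
  have hS : ∑ j, (7/2)*B*(γ k * gIter x y α γ Bk k j)^2
      = (7/2)*B*(γ k)^2 * ∑ j, (gIter x y α γ Bk k j)^2 := by
    rw [Finset.mul_sum]
    apply Finset.sum_congr rfl
    intro j _; ring
  rw [hT, hS]
  have hgsq : ∑ j, (gIter x y α γ Bk k j)^2
      ≤ 2 * Lc * batchLoss x y (Bk k) (betaIter x y α γ Bk k) := by
    rw [hgr]
    exact grad_sq_le x y (Bk k) (hBk k) _ Lc hLc (fun v => (hop k v).1)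
  have hL0 : 0 ≤ batchLoss x y (Bk k) (betaIter x y α γ Bk k) := batchLoss_nonneg x y _ _
  have hγ0 : 0 ≤ γ k := hγ k
  have h78 : γ k * (Lc * B) ≤ 1/8 := by
    have := (hsteps k le_rfl).2
    rwa [le_div_iff₀ hLB] at this
  have hfin : (7/2)*B*(γ k)^2 * ∑ j, (gIter x y α γ Bk k j)^2
      ≤ γ k * batchLoss x y (Bk k) (betaIter x y α γ Bk k) := by
    have h1 : (7/2)*B*(γ k)^2 * ∑ j, (gIter x y α γ Bk k j)^2
        ≤ (7/2)*B*(γ k)^2 * (2 * Lc * batchLoss x y (Bk k) (betaIter x y α γ Bk k)) := by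
      apply mul_le_mul_of_nonneg_left hgsq (by positivity)
    have h2 : (7/2)*B*(γ k)^2 * (2 * Lc * batchLoss x y (Bk k) (betaIter x y α γ Bk k))
        ≤ γ k * batchLoss x y (Bk k) (betaIter x y α γ Bk k) := by
      nlinarith [mul_nonneg hγ0 hL0, h78, hB.le, hLc.le]
    linarith
  linarith [hfin]
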